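/- arXiv:2204.08441 — 3 statements merged into one kernel-verified Lean document; each statement's English description precedes it below -/
import Mathlib

section
/- The function $w_s(s) = e^{s^2}\,\mathrm{erfc}(s)$ (the Faddeeva function evaluated at $\iota s$, i.e. $w(\iota s)$) is a positive real function: it is real-valued for real $s$, and $\Re[w_s(s)] \ge 0$ whenever $\Re[s] > 0$. -/
/-!
`ws` commutes with complex conjugation, as all its ingredients do, so it is real on the real axis.

For `0 < re s`, the complex tail `G(c) = ∫_0^∞ e^{-(u+c)²} du` satisfies `G' = -e^{-c²}` and
`G(0) = √π/2`, so integrating along the segment `[0, s]` gives `erfc s = 2/√π · G(s)` and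
`ws s = 2/√π ∫_0^∞ e^{-u² - 2su} du`. Writing `e^{-u²}` as the Fourier transform of a Gaussian
and swapping the integrals turns this into `ws s = π⁻¹ ∫ e^{-t²} / (s - i t) dt`, and
`re (1 / (s - i t)) = re s / |s - i t|² ≥ 0`.
-/

open Complex

/-- Complex error function via a parametrized integral. -/
noncomputable def cerf (z : ℂ) : ℂ :=
  (2 / Real.sqrt Real.pi) * ∫ t in (0:ℝ)..1, z * Complex.exp (-((t:ℂ) * z)^2)

/-- Complex complementary error function. -/
noncomputable def cerfc (z : ℂ) : ℂ := 1 - cerf z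

/-- The Faddeeva function of imaginary argument, `w_s(s) = w(I s) = e^{s^2} erfc(s)`. -/
noncomputable def ws (s : ℂ) : ℂ := Complex.exp (s^2) * cerfc s

open MeasureTheory Real Set Filter Topology

lemma integrable_add_mul_exp_neg_sq_sub (a c : ℝ) :
    Integrable fun u : ℝ => (u + a) * rexp (-(u - c) ^ 2) := by
  have h := ((integrable_mul_exp_neg_mul_sq one_pos).comp_sub_right c).add
    (((integrable_exp_neg_mul_sq one_pos).comp_sub_right c).const_mul (a + c))
  refine h.congr (ae_of_all _ fun u => ?_)
  simp only [Pi.add_apply, neg_one_mul]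
  ring

lemma re_integral_nonneg {α : Type*} [MeasurableSpace α] {μ : Measure α} {f : α → ℂ}
    (hf : ∀ x, 0 ≤ (f x).re) : 0 ≤ (∫ x, f x ∂μ).re := by
  by_cases hint : Integrable f μ
  · rw [← RCLike.re_to_complex, ← integral_re hint]
    exact integral_nonneg hf
  · simp [integral_undef hint]

lemma ofReal_pi_cpow_half : (π : ℂ) ^ (1 / 2 : ℂ) = √π := by
  rw [Real.sqrt_eq_rpow, Complex.ofReal_cpow Real.pi_pos.le]
  norm_num

lemma integral_Ioi_cexp_neg_mul {c : ℂ} (hc : 0 < c.re) :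
    ∫ u in Ioi (0 : ℝ), cexp (-c * u) = c⁻¹ := by
  rw [integral_exp_mul_complex_Ioi (by simpa using hc)]
  simp [neg_div, div_neg]

lemma integral_cexp_neg_sq_mul_cexp_mul_I (u : ℝ) :
    ∫ t : ℝ, cexp (-(t : ℂ) ^ 2) * cexp (2 * u * t * I) = √π * cexp (-(u : ℂ) ^ 2) := by
  have h := fourierIntegral_gaussian (b := 1) one_pos (2 * u)
  rw [div_one, ofReal_pi_cpow_half, show -(2 * (u : ℂ)) ^ 2 / (4 * 1) = -(u : ℂ) ^ 2 by ring] at h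
  rw [← h]
  congr 1 with t
  ring_nf

lemma re_neg_sq_add_le {u R : ℝ} {z : ℂ} (hu : 0 ≤ u) (hz : ‖z‖ ≤ R) :
    (-((u : ℂ) + z) ^ 2).re ≤ -(u - R) ^ 2 + 2 * R ^ 2 := by
  have hre : (-((u : ℂ) + z) ^ 2).re = -(u + z.re) ^ 2 + z.im ^ 2 := by
    simp only [sq, neg_re, mul_re, add_re, ofReal_re, add_im, ofReal_im, zero_add, neg_sub]
    ring
  have hnorm : z.re ^ 2 + z.im ^ 2 ≤ R ^ 2 := by
    rw [← Complex.normSq_add_mul_I z.re z.im, Complex.re_add_im, ← Complex.sq_norm]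
    exact pow_le_pow_left₀ (norm_nonneg z) hz 2
  have hre_le : -z.re ≤ R := (neg_le_abs z.re).trans ((Complex.abs_re_le_norm z).trans hz)
  nlinarith [mul_le_mul_of_nonneg_left hre_le hu]

lemma norm_mul_cexp_neg_sq_add_le {u R : ℝ} {z : ℂ} (hu : 0 ≤ u) (hz : ‖z‖ ≤ R) :
    ‖((u : ℂ) + z) * cexp (-((u : ℂ) + z) ^ 2)‖ ≤
      rexp (2 * R ^ 2) * ((u + R) * rexp (-(u - R) ^ 2)) := by
  rw [norm_mul, Complex.norm_exp]
  have hnorm_le : ‖(u : ℂ) + z‖ ≤ u + R := by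
    refine (norm_add_le _ _).trans ?_
    rw [Complex.norm_real, Real.norm_of_nonneg hu]
    linarith
  have hexp_le : rexp (-((u : ℂ) + z) ^ 2).re ≤ rexp (-(u - R) ^ 2) * rexp (2 * R ^ 2) := by
    rw [← Real.exp_add]
    exact Real.exp_le_exp.mpr (re_neg_sq_add_le hu hz)
  calc _ ≤ (u + R) * (rexp (-(u - R) ^ 2) * rexp (2 * R ^ 2)) :=
        mul_le_mul hnorm_le hexp_le (by positivity) (by linarith [norm_nonneg ((u : ℂ) + z)])
    _ = _ := by ring

lemma hasDerivAt_cexp_neg_sq (w : ℂ) :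
    HasDerivAt (fun w => cexp (-w ^ 2)) (-2 * (w * cexp (-w ^ 2))) w := by
  have h : HasDerivAt (fun w : ℂ => -w ^ 2) (-(2 * w)) w := by
    simpa using (hasDerivAt_pow 2 w).fun_neg
  exact h.cexp.congr_deriv (by ring)

lemma integrable_cexp_neg_sq_add (c : ℂ) :
    Integrable fun u : ℝ => cexp (-((u : ℂ) + c) ^ 2) := by
  refine (integrable_cexp_quadratic (b := 1) one_pos (-2 * c) (-c ^ 2)).congr
    (ae_of_all _ fun u => ?_)
  ring_nf

lemma tendsto_cexp_neg_sq_add_atTop (c : ℂ) :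
    Tendsto (fun u : ℝ => cexp (-((u : ℂ) + c) ^ 2)) atTop (𝓝 0) := by
  rw [Complex.tendsto_exp_nhds_zero_iff]
  have hre (u : ℝ) : (-((u : ℂ) + c) ^ 2).re = -(u + c.re) ^ 2 + c.im ^ 2 := by
    simp only [sq, neg_re, mul_re, add_re, ofReal_re, add_im, ofReal_im, zero_add, neg_sub]
    ring
  simp only [hre]
  exact tendsto_atBot_add_const_right _ _ <| tendsto_neg_atTop_atBot.comp <|
    (tendsto_pow_atTop two_ne_zero).comp (tendsto_atTop_add_const_right _ _ tendsto_id)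

noncomputable def gaussianTail (c : ℂ) : ℂ := ∫ u in Ioi (0 : ℝ), cexp (-((u : ℂ) + c) ^ 2)

lemma hasDerivAt_gaussianTail (c : ℂ) : HasDerivAt gaussianTail (-cexp (-c ^ 2)) c := by
  set R := ‖c‖ + 1
  have hR {z : ℂ} (hz : z ∈ Metric.ball c 1) : ‖z‖ ≤ R := by
    have := norm_le_norm_add_norm_sub' z c
    rw [mem_ball_iff_norm] at hz
    linarith
  have hderiv (u : ℝ) (z : ℂ) : HasDerivAt (fun z => cexp (-((u : ℂ) + z) ^ 2))
      (-2 * (((u : ℂ) + z) * cexp (-((u : ℂ) + z) ^ 2))) z :=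
    (hasDerivAt_cexp_neg_sq _).comp_const_add _ _
  obtain ⟨hF'_int, hasDeriv⟩ := hasDerivAt_integral_of_dominated_loc_of_deriv_le
    (F := fun z (u : ℝ) => cexp (-((u : ℂ) + z) ^ 2))
    (μ := volume.restrict (Ioi 0)) (Metric.ball_mem_nhds c one_pos)
    (Eventually.of_forall fun z => (by fun_prop : Continuous _).aestronglyMeasurable)
    (integrable_cexp_neg_sq_add c).integrableOn
    (by fun_prop : Continuous _).aestronglyMeasurable
    (bound := fun u => 2 * (rexp (2 * R ^ 2) * ((u + R) * rexp (-(u - R) ^ 2))))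
    ((ae_restrict_mem measurableSet_Ioi).mono fun u hu z hz => by
      rw [norm_mul, norm_neg, Complex.norm_ofNat]
      exact mul_le_mul_of_nonneg_left
        (norm_mul_cexp_neg_sq_add_le (le_of_lt hu) (hR hz)) zero_le_two)
    ((integrable_add_mul_exp_neg_sq_sub R R).const_mul _ |>.const_mul _).integrableOn
    (ae_of_all _ fun u z _ => hderiv u z)
  have hderiv_u (u : ℝ) : HasDerivAt (fun u : ℝ => cexp (-((u : ℂ) + c) ^ 2))
      (-2 * (((u : ℂ) + c) * cexp (-((u : ℂ) + c) ^ 2))) u :=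
    ((hasDerivAt_cexp_neg_sq _).comp_add_const (u : ℂ) c).comp_ofReal
  rwa [integral_Ioi_of_hasDerivAt_of_tendsto' (fun u _ => hderiv_u u) hF'_int
    (tendsto_cexp_neg_sq_add_atTop c), Complex.ofReal_zero, zero_add, zero_sub] at hasDeriv

lemma gaussianTail_zero : gaussianTail 0 = √π / 2 := by
  have h := integral_gaussian_Ioi 1
  rw [div_one] at h
  rw [gaussianTail, ← Complex.ofReal_ofNat, ← Complex.ofReal_div, ← h, ← integral_complex_ofReal]
  congr 1 with u
  push_cast
  ring_nf

lemma gaussianTail_eq_sub (s : ℂ) :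
    gaussianTail s = √π / 2 - ∫ t in (0 : ℝ)..1, s * cexp (-((t : ℂ) * s) ^ 2) := by
  have hderiv (r : ℝ) : HasDerivAt (fun r : ℝ => gaussianTail (r * s))
      (-(s * cexp (-((r : ℂ) * s) ^ 2))) r := by
    have hlin : HasDerivAt (fun z : ℂ => z * s) s r := by
      simpa using (hasDerivAt_id (r : ℂ)).mul_const s
    exact ((hasDerivAt_gaussianTail _).comp (r : ℂ) hlin).comp_ofReal.congr_deriv (by ring)
  have hFTC := intervalIntegral.integral_eq_sub_of_hasDerivAt (fun r _ => hderiv r)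
    (Continuous.intervalIntegrable (by fun_prop) 0 1)
  rw [intervalIntegral.integral_neg] at hFTC
  simp only [Complex.ofReal_one, one_mul, Complex.ofReal_zero, zero_mul, gaussianTail_zero] at hFTC
  linear_combination -hFTC

lemma cerfc_eq_gaussianTail (s : ℂ) : cerfc s = 2 / √π * gaussianTail s := by
  have hπ : (√π : ℂ) ≠ 0 := by exact_mod_cast (Real.sqrt_pos.mpr Real.pi_pos).ne'
  rw [cerfc, cerf, gaussianTail_eq_sub]
  field_simp

lemma cexp_sq_mul_gaussianTail (s : ℂ) :
    cexp (s ^ 2) * gaussianTail s = ∫ u in Ioi (0 : ℝ), cexp (-(u : ℂ) ^ 2 - 2 * s * u) := by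
  rw [gaussianTail, ← integral_const_mul]
  congr 1 with u
  rw [← Complex.exp_add]
  ring_nf

lemma sqrt_pi_mul_integral_Ioi_cexp_eq {s : ℂ} (hs : 0 < s.re) :
    √π * ∫ u in Ioi (0 : ℝ), cexp (-(u : ℂ) ^ 2 - 2 * s * u) =
      ∫ t : ℝ, cexp (-(t : ℂ) ^ 2) * (2 * (s - t * I))⁻¹ := by
  set F : ℝ → ℝ → ℂ := fun t u => cexp (-(t : ℂ) ^ 2) * cexp (-(2 * (s - t * I)) * u)
  have hF : Integrable (Function.uncurry F) (volume.prod (volume.restrict (Ioi 0))) := by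
    refine ((integrable_exp_neg_mul_sq one_pos).mul_prod
      (exp_neg_integrableOn_Ioi 0 (by positivity : 0 < 2 * s.re))).mono'
      (by fun_prop : Continuous _).aestronglyMeasurable (ae_of_all _ fun ⟨t, u⟩ => le_of_eq ?_)
    simp only [Function.uncurry, F, norm_mul, Complex.norm_exp]
    simp [Complex.mul_re, ← Complex.ofReal_pow, ← Real.exp_add]
  have hu (t : ℝ) : ∫ u in Ioi (0 : ℝ), F t u = cexp (-(t : ℂ) ^ 2) * (2 * (s - t * I))⁻¹ := by
    rw [integral_const_mul, integral_Ioi_cexp_neg_mul (by simpa using hs)]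
  have ht (u : ℝ) : ∫ t : ℝ, F t u = √π * cexp (-(u : ℂ) ^ 2 - 2 * s * u) := by
    have hFtu (t : ℝ) : F t u = cexp (-2 * s * u) * (cexp (-(t : ℂ) ^ 2) * cexp (2 * u * t * I)) := by
      simp only [F, ← Complex.exp_add]
      ring_nf
    rw [integral_congr_ae (ae_of_all _ hFtu), integral_const_mul,
      integral_cexp_neg_sq_mul_cexp_mul_I, mul_left_comm, ← Complex.exp_add]
    ring_nf
  simp only [← hu, integral_integral_swap hF, ht, integral_const_mul]

lemma ws_eq_integral {s : ℂ} (hs : 0 < s.re) :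
    ws s = (π : ℂ)⁻¹ * ∫ t : ℝ, rexp (-t ^ 2) / (s - t * I) := by
  have hπ : (√π : ℂ) ≠ 0 := by exact_mod_cast (Real.sqrt_pos.mpr Real.pi_pos).ne'
  have hπ2 : (√π : ℂ) ^ 2 = π := by exact_mod_cast Real.sq_sqrt Real.pi_pos.le
  have hrepr := sqrt_pi_mul_integral_Ioi_cexp_eq hs
  rw [← cexp_sq_mul_gaussianTail] at hrepr
  have hint : ∫ t : ℝ, (rexp (-t ^ 2) : ℂ) / (s - t * I) =
      2 * ∫ t : ℝ, cexp (-(t : ℂ) ^ 2) * (2 * (s - t * I))⁻¹ := by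
    rw [← integral_const_mul]
    congr 1 with t
    rw [mul_inv, Complex.ofReal_exp]
    push_cast
    ring
  rw [ws, cerfc_eq_gaussianTail, ← hπ2, hint, ← hrepr]
  field_simp

lemma ws_re_nonneg {s : ℂ} (hs : 0 < s.re) : 0 ≤ (ws s).re := by
  rw [ws_eq_integral hs, ← Complex.ofReal_inv, Complex.re_ofReal_mul]
  refine mul_nonneg (by positivity) (re_integral_nonneg fun t => ?_)
  rw [Complex.div_re, Complex.ofReal_re, Complex.ofReal_im, zero_mul, zero_div, add_zero]
  have hre : (s - t * I).re = s.re := by simp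
  rw [hre]
  exact div_nonneg (mul_nonneg (Real.exp_pos _).le hs.le) (Complex.normSq_nonneg _)

open ComplexConjugate in
lemma ws_conj (z : ℂ) : ws (conj z) = conj (ws z) := by
  simp [ws, cerfc, cerf, map_ofNat, ← Complex.exp_conj, ← intervalIntegral.intervalIntegral_conj]

lemma ws_ofReal_im (x : ℝ) : (ws x).im = 0 :=
  Complex.conj_eq_iff_im.mp (by rw [← ws_conj, Complex.conj_ofReal])

/-- `w_s` is a positive real function: real-valued on the real axis, and with
nonnegative real part on the open right half-plane. -/
theorem ws_positive_real_function :
    (∀ s : ℝ, (ws (s : ℂ)).im = 0) ∧ (∀ s : ℂ, 0 < s.re → 0 ≤ (ws s).re) :=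
  ⟨ws_ofReal_im, fun _ => ws_re_nonneg⟩
end

section
/- The Fourier transform of the time-domain Gaussian oscillator: for $a, \sigma, \Omega > 0$, the function $\chi_G(t) = a\, e^{-t^2\sigma^2/4} \sin(\Omega t)\, \theta(t)$ satisfies $\int_0^\infty e^{\iota\omega t}\, \chi_G(t)\, dt = \iota A\,[\,w((\omega-\Omega)/\sigma) - w((\omega+\Omega)/\sigma)\,]$ for all real $\omega$, where $A = a\sqrt{\pi}/(2\sigma)$ and $w$ is the Faddeeva function. -/
open Complex

/-- The Faddeeva function `w(z) = e^{-z²} erfc(-I z)`. -/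
noncomputable def faddeeva (z : ℂ) : ℂ := Complex.exp (-z^2) * cerfc (-Complex.I * z)

/-!
Writing `sin (Ω t)` as a difference of exponentials reduces the claim to the one-sided
transform `∫₀^∞ e^{iut} e^{-σ²t²/4} dt`, and completing the square together with `t ↦ σt/2`
turns this into `e^{-β²} G(β)` with `β = u/σ` and `G(β) = ∫₀^∞ e^{-(s - iβ)²} ds`.
Since `∂_β e^{-(s-iβ)²} = -i ∂_s e^{-(s-iβ)²}`, differentiating under the integral gives
`G'(β) = i e^{β²}`; with `G(0) = √π/2` this is `G(β) = √π/2 · erfc(-iβ)`, whence the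
Faddeeva function.
-/

open MeasureTheory Set Filter Topology Real

lemma norm_cexp_neg_sq_sub_I_mul (s x : ℝ) :
    ‖cexp (-((s : ℂ) - I * x) ^ 2)‖ = Real.exp (x ^ 2 - s ^ 2) := by
  rw [Complex.norm_exp]
  congr 1
  simp [sq]

lemma integrable_cexp_neg_sq_sub_I_mul (x : ℝ) :
    Integrable fun s : ℝ => cexp (-((s : ℂ) - I * x) ^ 2) := by
  convert integrable_cexp_quadratic (b := 1) (by simp) (2 * I * x) ((x : ℂ) ^ 2) using 3 with s
  linear_combination (-(x : ℂ) ^ 2) * I_sq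

lemma integrable_abs_add_mul_exp_neg_sq (B : ℝ) :
    Integrable fun s : ℝ => (|s| + B) * Real.exp (-s ^ 2) := by
  have hexp := integrable_exp_neg_mul_sq (b := 1) one_pos
  have habs := (integrable_mul_exp_neg_mul_sq (b := 1) one_pos).norm
  simp only [neg_one_mul, norm_mul, Real.norm_eq_abs, abs_of_pos (Real.exp_pos _)] at hexp habs
  refine (habs.add (hexp.const_mul B)).congr (ae_of_all _ fun s => ?_)
  simp [add_mul]

lemma norm_sub_I_mul_mul_cexp_le {x B : ℝ} (hx : |x| ≤ B) (s : ℝ) :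
    ‖((s : ℂ) - I * x) * cexp (-((s : ℂ) - I * x) ^ 2)‖ ≤
      Real.exp (B ^ 2) * ((|s| + B) * Real.exp (-s ^ 2)) := by
  have hsq : x ^ 2 ≤ B ^ 2 := sq_le_sq' (abs_le.mp hx).1 (abs_le.mp hx).2
  have hB : 0 ≤ |s| + B := by linarith [abs_nonneg s, abs_nonneg x]
  rw [norm_mul, norm_cexp_neg_sq_sub_I_mul, mul_left_comm, ← Real.exp_add]
  gcongr
  · calc ‖(s : ℂ) - I * x‖ ≤ ‖(s : ℂ)‖ + ‖I * (x : ℂ)‖ := norm_sub_le _ _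
      _ ≤ |s| + B := by simpa using hx
  · linarith

lemma integrable_sub_I_mul_mul_cexp (x : ℝ) :
    Integrable fun s : ℝ => ((s : ℂ) - I * x) * cexp (-((s : ℂ) - I * x) ^ 2) :=
  ((integrable_abs_add_mul_exp_neg_sq |x|).const_mul _).mono' (by fun_prop)
    (ae_of_all _ (norm_sub_I_mul_mul_cexp_le le_rfl))

lemma integral_Ioi_sub_I_mul_mul_cexp (x : ℝ) :
    ∫ s in Ioi (0 : ℝ), ((s : ℂ) - I * x) * cexp (-((s : ℂ) - I * x) ^ 2) = cexp (x ^ 2) / 2 := by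
  have hderiv (s : ℝ) : HasDerivAt (fun s : ℝ => cexp (-((s : ℂ) - I * x) ^ 2))
      (-2 * (((s : ℂ) - I * x) * cexp (-((s : ℂ) - I * x) ^ 2))) s := by
    have hsub : HasDerivAt (fun w : ℂ => w - I * x) 1 (s : ℂ) := (hasDerivAt_id _).sub_const _
    have hexponent : HasDerivAt (fun w : ℂ => -(w - I * x) ^ 2) (-2 * ((s : ℂ) - I * x)) s :=
      (hsub.pow 2).neg.congr_deriv (by ring)
    convert hexponent.cexp.comp_ofReal using 1
    ring
  have hlim : Tendsto (fun s : ℝ => cexp (-((s : ℂ) - I * x) ^ 2)) atTop (𝓝 0) := by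
    rw [tendsto_zero_iff_norm_tendsto_zero]
    simp only [norm_cexp_neg_sq_sub_I_mul]
    exact Real.tendsto_exp_atBot.comp (tendsto_atBot_add_const_left _ _
      (tendsto_neg_atBot_iff.mpr (tendsto_pow_atTop two_ne_zero)))
  have hFTC := integral_Ioi_of_hasDerivAt_of_tendsto (hderiv 0).continuousAt.continuousWithinAt
    (fun s _ => hderiv s) ((integrable_sub_I_mul_mul_cexp x).const_mul (-2)).integrableOn hlim
  rw [integral_const_mul] at hFTC
  have hx0 : -(((0 : ℝ) : ℂ) - I * x) ^ 2 = (x : ℂ) ^ 2 := by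
    push_cast; linear_combination (-(x : ℂ) ^ 2) * I_sq
  rw [hx0] at hFTC
  linear_combination hFTC / (-2)

lemma hasDerivAt_integral_Ioi_cexp_neg_sq_sub_I_mul (β : ℝ) :
    HasDerivAt (fun x : ℝ => ∫ s in Ioi (0 : ℝ), cexp (-((s : ℂ) - I * x) ^ 2))
      (I * cexp (β ^ 2)) β := by
  have hderiv (s x : ℝ) : HasDerivAt (fun x : ℝ => cexp (-((s : ℂ) - I * x) ^ 2))
      (2 * I * (((s : ℂ) - I * x) * cexp (-((s : ℂ) - I * x) ^ 2))) x := by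
    have hsub : HasDerivAt (fun w : ℂ => s - I * w) (-I) (x : ℂ) := by
      simpa using ((hasDerivAt_id (x : ℂ)).const_mul I).const_sub (s : ℂ)
    have hexponent : HasDerivAt (fun w : ℂ => -((s : ℂ) - I * w) ^ 2)
        (2 * I * ((s : ℂ) - I * x)) x :=
      (hsub.pow 2).neg.congr_deriv (by ring)
    convert hexponent.cexp.comp_ofReal using 1
    ring
  set B := |β| + 1
  have hbound (s : ℝ) : ∀ x ∈ Metric.ball β 1,
      ‖2 * I * (((s : ℂ) - I * x) * cexp (-((s : ℂ) - I * x) ^ 2))‖ ≤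
        2 * (Real.exp (B ^ 2) * ((|s| + B) * Real.exp (-s ^ 2))) := by
    intro x hx
    have hxB : |x| ≤ B := by
      rw [Metric.mem_ball, Real.dist_eq] at hx
      linarith [abs_sub_abs_le_abs_sub x β]
    have h2I : ‖(2 : ℂ) * I‖ = 2 := by simp
    rw [norm_mul, h2I]
    exact mul_le_mul_of_nonneg_left (norm_sub_I_mul_mul_cexp_le hxB s) zero_le_two
  have hdiff := hasDerivAt_integral_of_dominated_loc_of_deriv_le (μ := volume.restrict (Ioi 0))
    (F := fun x s : ℝ => cexp (-((s : ℂ) - I * x) ^ 2))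
    (Metric.ball_mem_nhds β one_pos)
    (Eventually.of_forall fun x => by fun_prop) (integrable_cexp_neg_sq_sub_I_mul β).integrableOn
    (by fun_prop) (ae_of_all _ hbound)
    (((integrable_abs_add_mul_exp_neg_sq B).const_mul _).const_mul 2).integrableOn
    (ae_of_all _ fun s x _ => hderiv s x)
  refine hdiff.2.congr_deriv ?_
  rw [integral_const_mul, integral_Ioi_sub_I_mul_mul_cexp]
  ring

lemma integral_Ioi_cexp_neg_sq_sub_I_mul_eq_add_integral (β : ℝ) :
    ∫ s in Ioi (0 : ℝ), cexp (-((s : ℂ) - I * β) ^ 2) =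
      (√π / 2 : ℝ) + I * ∫ u in (0 : ℝ)..β, cexp ((u : ℂ) ^ 2) := by
  have hcont : Continuous fun u : ℝ => I * cexp ((u : ℂ) ^ 2) := by fun_prop
  have hFTC := intervalIntegral.integral_eq_sub_of_hasDerivAt
    (fun x _ => hasDerivAt_integral_Ioi_cexp_neg_sq_sub_I_mul x) (hcont.intervalIntegrable 0 β)
  have hgauss : ∫ s in Ioi (0 : ℝ), cexp (-((s : ℂ) - I * (0 : ℝ)) ^ 2) = (√π / 2 : ℝ) := by
    rw [← div_one π, ← integral_gaussian_Ioi 1, ← integral_complex_ofReal]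
    congr 1 with s
    simp
  rw [intervalIntegral.integral_const_mul, hgauss] at hFTC
  linear_combination -hFTC

lemma cerf_neg_I_mul_ofReal (β : ℝ) :
    cerf (-I * β) = -I * (2 / √π : ℝ) * ∫ u in (0 : ℝ)..β, cexp ((u : ℂ) ^ 2) := by
  have hexponent (t : ℝ) : -((t : ℂ) * (-I * β)) ^ 2 = ((β * t : ℝ) : ℂ) ^ 2 := by
    push_cast
    linear_combination (-(t : ℂ) ^ 2 * β ^ 2) * I_sq
  have hsubst := intervalIntegral.smul_integral_comp_mul_left (a := 0) (b := 1)
    (fun u : ℝ => cexp ((u : ℂ) ^ 2)) β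
  rw [mul_zero, mul_one, Complex.real_smul, ← intervalIntegral.integral_const_mul] at hsubst
  simp only [cerf, hexponent]
  rw [← hsubst, ← intervalIntegral.integral_const_mul, ← intervalIntegral.integral_const_mul]
  congr 1 with t
  push_cast
  ring

lemma integral_Ioi_cexp_neg_sq_sub_I_mul (β : ℝ) :
    ∫ s in Ioi (0 : ℝ), cexp (-((s : ℂ) - I * β) ^ 2) = (√π / 2 : ℝ) * cerfc (-I * β) := by
  rw [integral_Ioi_cexp_neg_sq_sub_I_mul_eq_add_integral, cerfc, cerf_neg_I_mul_ofReal]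
  push_cast
  field_simp
  ring

lemma integrable_cexp_I_mul_mul_gaussian (u : ℝ) {σ : ℝ} (hσ : σ ≠ 0) :
    Integrable fun t : ℝ => cexp (I * u * t) * (Real.exp (-t ^ 2 * σ ^ 2 / 4) : ℂ) := by
  have hgauss := integrable_exp_neg_mul_sq (b := σ ^ 2 / 4) (by positivity)
  refine hgauss.mono' (by fun_prop) (ae_of_all _ fun t => le_of_eq ?_)
  have hphase : I * u * t = ((u * t : ℝ) : ℂ) * I := by push_cast; ring
  rw [norm_mul, norm_real, Real.norm_of_nonneg (Real.exp_pos _).le, hphase,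
    norm_exp_ofReal_mul_I, one_mul]
  ring_nf

lemma integral_Ioi_cexp_I_mul_mul_gaussian (u : ℝ) {σ : ℝ} (hσ : 0 < σ) :
    ∫ t in Ioi (0 : ℝ), cexp (I * u * t) * (Real.exp (-t ^ 2 * σ ^ 2 / 4) : ℂ) =
      (√π / σ : ℝ) * faddeeva (u / σ : ℝ) := by
  set β := u / σ
  have hσ' : (σ : ℂ) ≠ 0 := by exact_mod_cast hσ.ne'
  have hu : (u : ℂ) = σ * β := by
    simp only [β]
    push_cast
    field_simp
  have hsquare (t : ℝ) : cexp (I * u * t) * (Real.exp (-t ^ 2 * σ ^ 2 / 4) : ℂ) =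
      cexp (-(β : ℂ) ^ 2) * cexp (-(((σ / 2 * t : ℝ) : ℂ) - I * β) ^ 2) := by
    rw [ofReal_exp, ← Complex.exp_add, ← Complex.exp_add, hu]
    congr 1
    push_cast
    linear_combination (β : ℂ) ^ 2 * I_sq
  simp_rw [hsquare]
  rw [integral_const_mul, integral_comp_mul_left_Ioi (fun s : ℝ => cexp (-((s : ℂ) - I * β) ^ 2))
    0 (half_pos hσ), mul_zero, integral_Ioi_cexp_neg_sq_sub_I_mul, faddeeva, real_smul]
  push_cast
  field_simp

lemma cexp_I_mul_mul_sin (ω Ω t : ℝ) :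
    cexp (I * ω * t) * (Real.sin (Ω * t) : ℂ) =
      I / 2 * (cexp (I * (ω - Ω : ℝ) * t) - cexp (I * (ω + Ω : ℝ) * t)) := by
  have hminus : I * ((ω - Ω : ℝ) : ℂ) * t = I * ω * t + -((Ω * t : ℝ) : ℂ) * I := by
    push_cast; ring
  have hplus : I * ((ω + Ω : ℝ) : ℂ) * t = I * ω * t + ((Ω * t : ℝ) : ℂ) * I := by
    push_cast; ring
  rw [ofReal_sin, Complex.sin, hminus, hplus, Complex.exp_add, Complex.exp_add]
  ring

theorem gaussian_oscillator_fourier_general (a σ Ω : ℝ) (hσ : 0 < σ)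
    (ω : ℝ) :
    (∫ t in Set.Ioi (0:ℝ), Complex.exp (Complex.I * (ω : ℂ) * (t : ℂ)) *
        ((a : ℂ) * (Real.exp (-t^2 * σ^2 / 4) : ℂ) * (Real.sin (Ω * t) : ℂ))) =
      Complex.I * ((a * Real.sqrt Real.pi / (2 * σ) : ℝ) : ℂ) *
        (faddeeva (((ω - Ω) / σ : ℝ) : ℂ) - faddeeva (((ω + Ω) / σ : ℝ) : ℂ)) := by
  have hintegrand (t : ℝ) : cexp (I * ω * t) *
      ((a : ℂ) * (Real.exp (-t ^ 2 * σ ^ 2 / 4) : ℂ) * (Real.sin (Ω * t) : ℂ)) =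
        a * I / 2 * (cexp (I * (ω - Ω : ℝ) * t) * (Real.exp (-t ^ 2 * σ ^ 2 / 4) : ℂ) -
          cexp (I * (ω + Ω : ℝ) * t) * (Real.exp (-t ^ 2 * σ ^ 2 / 4) : ℂ)) := by
    linear_combination (a : ℂ) * (Real.exp (-t ^ 2 * σ ^ 2 / 4) : ℂ) * cexp_I_mul_mul_sin ω Ω t
  simp_rw [hintegrand]
  rw [integral_const_mul,
    integral_sub (integrable_cexp_I_mul_mul_gaussian _ hσ.ne').integrableOn
      (integrable_cexp_I_mul_mul_gaussian _ hσ.ne').integrableOn,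
    integral_Ioi_cexp_I_mul_mul_gaussian _ hσ, integral_Ioi_cexp_I_mul_mul_gaussian _ hσ]
  push_cast
  ring

/-- One-sided Fourier transform of the time-domain Gaussian oscillator
`χ_G(t) = a e^{-t²σ²/4} sin(Ω t) θ(t)` equals `I A [w((ω-Ω)/σ) - w((ω+Ω)/σ)]`
with `A = a √π/(2σ)`. -/
theorem gaussian_oscillator_fourier (a σ Ω : ℝ) (ha : 0 < a) (hσ : 0 < σ) (hΩ : 0 < Ω)
    (ω : ℝ) :
    (∫ t in Set.Ioi (0:ℝ), Complex.exp (Complex.I * (ω : ℂ) * (t : ℂ)) *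
        ((a : ℂ) * (Real.exp (-t^2 * σ^2 / 4) : ℂ) * (Real.sin (Ω * t) : ℂ))) =
      Complex.I * ((a * Real.sqrt Real.pi / (2 * σ) : ℝ) : ℂ) *
        (faddeeva (((ω - Ω) / σ : ℝ) : ℂ) - faddeeva (((ω + Ω) / σ : ℝ) : ℂ)) :=
  gaussian_oscillator_fourier_general a σ Ω hσ ω
end

section
/- Forward and backward GDM parameter conversions are mutually inverse (damped case): given real $a > 0$, $\Gamma \ge 0$, $\Omega > 0$, $\varphi \in (-\pi, \pi]$, define $a_0 = a\Omega\cos\varphi - a\Gamma\sin\varphi$, $a_1 = -a\sin\varphi$, $b_0 = \Omega^2 + \Gamma^2$, $b_1 = 2\Gamma$. Then $b_1^2/4 < b_0$, and the recovered parameters $\Gamma' = b_1/2$, $\Omega' = \sqrt{b_0 - \Gamma'^2}$, $a' = \sqrt{a_0^2 - a_0 a_1 b_1 + a_1^2 b_0}/\Omega'$, $\varphi' = \mathrm{atan2}(-a_1\Omega', a_0 - a_1\Gamma')$ satisfy $\Gamma' = \Gamma$, $\Omega' = \Omega$, $a' = a$, $\varphi' = \varphi$. -/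
/-- Forward and backward GDM parameter conversions are mutually inverse (damped case). -/
theorem gdm_conversion_inverse (a Γ Ω φ : ℝ) (ha : 0 < a) (hΓ : 0 ≤ Γ) (hΩ : 0 < Ω)
    (hφ₁ : -Real.pi < φ) (hφ₂ : φ ≤ Real.pi)
    (a0 a1 b0 b1 : ℝ)
    (ha0 : a0 = a * Ω * Real.cos φ - a * Γ * Real.sin φ)
    (ha1 : a1 = -a * Real.sin φ)
    (hb0 : b0 = Ω^2 + Γ^2)
    (hb1 : b1 = 2 * Γ)
    (Γ' Ω' a' φ' : ℝ)
    (hΓ' : Γ' = b1 / 2)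
    (hΩ' : Ω' = Real.sqrt (b0 - Γ'^2))
    (ha' : a' = Real.sqrt (a0^2 - a0 * a1 * b1 + a1^2 * b0) / Ω')
    (hφ' : φ' = Complex.arg (((a0 - a1 * Γ' : ℝ) : ℂ) + ((-a1 * Ω' : ℝ) : ℂ) * Complex.I)) :
    b1^2 / 4 < b0 ∧ Γ' = Γ ∧ Ω' = Ω ∧ a' = a ∧ φ' = φ := by
  have hΓeq : Γ' = Γ := by rw [hΓ', hb1]; ring
  have hΩeq : Ω' = Ω := by
    rw [hΩ', hΓeq, hb0, show Ω ^ 2 + Γ ^ 2 - Γ ^ 2 = Ω ^ 2 by ring, Real.sqrt_sq hΩ.le]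
  refine ⟨by nlinarith [sq_nonneg Ω], hΓeq, hΩeq, ?_, ?_⟩
  · have hexpr : a0 ^ 2 - a0 * a1 * b1 + a1 ^ 2 * b0 = (a * Ω) ^ 2 := by
      rw [ha0, ha1, hb0, hb1]
      linear_combination (a ^ 2 * Ω ^ 2) * (Real.sin_sq_add_cos_sq φ)
    rw [ha', hexpr, hΩeq, Real.sqrt_sq (by positivity)]
    field_simp
  · have h1 : a0 - a1 * Γ' = a * Ω * Real.cos φ := by rw [ha0, ha1, hΓeq]; ring
    have h2 : -a1 * Ω' = a * Ω * Real.sin φ := by rw [ha1, hΩeq]; ring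
    rw [hφ', h1, h2]
    have : ((a * Ω * Real.cos φ : ℝ) : ℂ) + ((a * Ω * Real.sin φ : ℝ) : ℂ) * Complex.I
        = (a * Ω : ℝ) * (Complex.cos φ + Complex.sin φ * Complex.I) := by
      push_cast [Complex.ofReal_cos, Complex.ofReal_sin]
      ring
    rw [this, Complex.arg_real_mul _ (by positivity),
      Complex.arg_cos_add_sin_mul_I ⟨hφ₁, hφ₂⟩]
end
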